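/- Let a and b be distinct positive real numbers, let k > 0 be a real number, and let β ≥ 2/3 be a real number. Then He(a^k, b^k) < A_β(a^k, b^k), where He is the Heronian mean and A_β is the power mean of order β. -/

import Mathlib

/-!
The power mean `A_β` is nondecreasing in `β` (Jensen for `t ↦ t ^ (q / p)`), so it suffices to
beat `A_{2/3}`. Writing `x = u⁶`, `y = v⁶` makes both sides algebraic; after squaring, the claim
is `8 (u⁶ + v⁶ + u³v³)² < 9 (u⁴ + v⁴)³`, and the difference is `(u - v)⁴` times a polynomial that
is visibly positive for `u, v > 0`.
-/

open Real

noncomputable def heronianMean (x y : ℝ) : ℝ := (x + y + √(x * y)) / 3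

noncomputable def powerMean (β x y : ℝ) : ℝ := ((x ^ β + y ^ β) / 2) ^ (1 / β)

lemma rpow_add_div_two_le_add_rpow_div_two {r s t : ℝ} (hr : 1 ≤ r) (hs : 0 ≤ s) (ht : 0 ≤ t) :
    ((s + t) / 2) ^ r ≤ (s ^ r + t ^ r) / 2 := by
  have h := (convexOn_rpow hr).2 (Set.mem_Ici.2 hs) (Set.mem_Ici.2 ht)
    (by norm_num : (0:ℝ) ≤ 1 / 2) (by norm_num : (0:ℝ) ≤ 1 / 2) (by norm_num)
  simp only [smul_eq_mul] at h
  calc ((s + t) / 2) ^ r = (1 / 2 * s + 1 / 2 * t) ^ r := by ring_nf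
    _ ≤ 1 / 2 * s ^ r + 1 / 2 * t ^ r := h
    _ = (s ^ r + t ^ r) / 2 := by ring

lemma powerMean_le_powerMean {p q x y : ℝ} (hp : 0 < p) (hpq : p ≤ q) (hx : 0 ≤ x) (hy : 0 ≤ y) :
    powerMean p x y ≤ powerMean q x y := by
  have hq : 0 < q := hp.trans_le hpq
  have hpow {z : ℝ} (hz : 0 ≤ z) : (z ^ p) ^ (q / p) = z ^ q := by
    rw [← rpow_mul hz, mul_div_cancel₀ _ hp.ne']
  have hmid : ((x ^ p + y ^ p) / 2) ^ (q / p) ≤ (x ^ q + y ^ q) / 2 := by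
    simpa only [hpow hx, hpow hy] using rpow_add_div_two_le_add_rpow_div_two
      ((one_le_div hp).2 hpq) (rpow_nonneg hx p) (rpow_nonneg hy p)
  calc powerMean p x y = (((x ^ p + y ^ p) / 2) ^ (q / p)) ^ (1 / q) := by
        rw [powerMean, ← rpow_mul (by positivity)]
        field_simp
    _ ≤ powerMean q x y := by
        unfold powerMean
        gcongr

lemma sq_heronian_sixth_powers_lt {u v : ℝ} (hu : 0 < u) (hv : 0 < v) (huv : u ≠ v) :
    ((u ^ 6 + v ^ 6 + u ^ 3 * v ^ 3) / 3) ^ 2 < ((u ^ 4 + v ^ 4) / 2) ^ 3 := by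
  have hfactor : 9 * (u ^ 4 + v ^ 4) ^ 3 - 8 * (u ^ 6 + v ^ 6 + u ^ 3 * v ^ 3) ^ 2 =
      (u - v) ^ 4 * (u ^ 8 + v ^ 8 + 4 * u * v * (u ^ 6 + u ^ 4 * v ^ 2 + u ^ 2 * v ^ 4 + v ^ 6)
        + 10 * u ^ 2 * v ^ 2 * (u ^ 2 - v ^ 2) ^ 2 + 18 * u ^ 4 * v ^ 4) := by
    ring
  have hsub : u - v ≠ 0 := sub_ne_zero.2 huv
  have hpos : 0 < 9 * (u ^ 4 + v ^ 4) ^ 3 - 8 * (u ^ 6 + v ^ 6 + u ^ 3 * v ^ 3) ^ 2 := by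
    rw [hfactor]
    positivity
  linarith

lemma heronianMean_pow_six {u v : ℝ} (hu : 0 ≤ u) (hv : 0 ≤ v) :
    heronianMean (u ^ 6) (v ^ 6) = (u ^ 6 + v ^ 6 + u ^ 3 * v ^ 3) / 3 := by
  rw [heronianMean, show u ^ 6 * v ^ 6 = (u ^ 3 * v ^ 3) ^ 2 by ring, sqrt_sq (by positivity)]

lemma powerMean_two_thirds_pow_six {u v : ℝ} (hu : 0 ≤ u) (hv : 0 ≤ v) :
    powerMean (2 / 3) (u ^ 6) (v ^ 6) = √(((u ^ 4 + v ^ 4) / 2) ^ 3) := by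
  have hpow {w : ℝ} (hw : 0 ≤ w) : (w ^ 6) ^ (2 / 3 : ℝ) = w ^ 4 := by
    rw [← rpow_natCast w 6, ← rpow_mul hw]
    norm_num
  rw [powerMean, hpow hu, hpow hv, sqrt_eq_rpow, ← rpow_natCast ((u ^ 4 + v ^ 4) / 2) 3,
    ← rpow_mul (by positivity)]
  norm_num

lemma heronianMean_lt_powerMean_two_thirds {x y : ℝ} (hx : 0 < x) (hy : 0 < y) (hxy : x ≠ y) :
    heronianMean x y < powerMean (2 / 3) x y := by
  have hroot {z : ℝ} (hz : 0 < z) : ∃ w, 0 < w ∧ w ^ 6 = z :=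
    ⟨z ^ (6⁻¹ : ℝ), rpow_pos_of_pos hz _, mod_cast rpow_inv_natCast_pow hz.le (by norm_num)⟩
  obtain ⟨u, hu, rfl⟩ := hroot hx
  obtain ⟨v, hv, rfl⟩ := hroot hy
  rw [heronianMean_pow_six hu.le hv.le, powerMean_two_thirds_pow_six hu.le hv.le,
    lt_sqrt (by positivity)]
  exact sq_heronian_sixth_powers_lt hu hv (by rintro rfl; exact hxy rfl)

theorem heronian_lt_power_mean (a b : ℝ) (ha : 0 < a) (hb : 0 < b) (hab : a ≠ b)
    (k : ℝ) (hk : 0 < k) (β : ℝ) (hβ : 2 / 3 ≤ β) :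
    (a ^ k + b ^ k + Real.sqrt (a ^ k * b ^ k)) / 3 <
      (((a ^ k) ^ β + (b ^ k) ^ β) / 2) ^ (1 / β) := by
  show heronianMean (a ^ k) (b ^ k) < powerMean β (a ^ k) (b ^ k)
  have hak : 0 < a ^ k := rpow_pos_of_pos ha k
  have hbk : 0 < b ^ k := rpow_pos_of_pos hb k
  have hne : a ^ k ≠ b ^ k := (rpow_left_injOn hk.ne').ne ha.le hb.le hab
  exact (heronianMean_lt_powerMean_two_thirds hak hbk hne).trans_le
    (powerMean_le_powerMean (by norm_num) hβ hak.le hbk.le)
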